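/- arXiv:2207.07948 — 4 statements merged into one kernel-verified Lean document; each statement's English description precedes it below -/
import Mathlib

section
/- Let t ≥ 1, let K ∈ ℝ^{t×t} be symmetric, b ∈ ℝ^t and c ∈ ℝ be such that the block matrix [[K, b], [bᵀ, c]] is positive semidefinite, and let λ > 0. Then bᵀ (K + λ I_t)⁻² b ≤ λ⁻¹ (c − bᵀ (K + λ I_t)⁻¹ b). Equivalently, ‖(K + λI_t)⁻¹ b‖₂ ≤ σ/√λ, where σ² = c − bᵀ(K + λI_t)⁻¹b is the posterior variance. -/
/-!
Put `A = K + λI` and `v = A⁻¹ b`, so that the left-hand side is `‖v‖²` and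
`bᵀv = vᵀKv + λ‖v‖²`. Positive semidefiniteness of the block matrix at the vector `(v, -1)`
gives `2 bᵀv ≤ vᵀKv + c`, i.e. `λ‖v‖² = bᵀv - vᵀKv ≤ c - bᵀv`.
-/

open Matrix

namespace Matrix

theorem PosSemidef.of_fromBlocks {n m R : Type*} [Fintype m] [CommRing R] [PartialOrder R]
    [StarRing R] {A : Matrix n n R} {B : Matrix n m R} {C : Matrix m n R} {D : Matrix m m R}
    (h : (fromBlocks A B C D).PosSemidef) : A.PosSemidef :=
  h.submatrix Sum.inl

variable {n : Type*} [Fintype n]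

theorem PosSemidef.two_mul_dotProduct_le_of_fromBlocks {ι : Type*} [Unique ι]
    {K : Matrix n n ℝ} {b : n → ℝ} {c : ℝ}
    (h : (fromBlocks K (replicateCol ι b) (replicateRow ι b) (of fun _ _ => c)).PosSemidef)
    (v : n → ℝ) : 2 * (b ⬝ᵥ v) ≤ v ⬝ᵥ (K *ᵥ v) + c := by
  have hv := h.dotProduct_mulVec_nonneg (Sum.elim v (-1))
  simp only [star_trivial, fromBlocks_mulVec, Sum.elim_comp_inl, Sum.elim_comp_inr,
    sumElim_dotProduct_sumElim, dotProduct_add, neg_dotProduct] at hv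
  simp only [dotProduct, mulVec, Finset.univ_unique, replicateCol_apply, replicateRow_apply,
    of_apply, Pi.neg_apply, Pi.one_apply, mul_neg, mul_one, one_mul, neg_neg,
    Finset.sum_neg_distrib, Finset.sum_const, Finset.card_singleton, one_smul,
    mul_comm (v _) (b _)] at hv ⊢
  linarith

theorem IsSymm.dotProduct_mul_self_mulVec {α : Type*} [CommSemiring α] {M : Matrix n n α}
    (hM : M.IsSymm) (b : n → α) : b ⬝ᵥ ((M * M) *ᵥ b) = (M *ᵥ b) ⬝ᵥ (M *ᵥ b) := by
  rw [← mulVec_mulVec, dotProduct_mulVec, ← mulVec_transpose, hM.eq]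

end Matrix

theorem posterior_mean_noise_coefficient_bound_general
    {t : ℕ}
    (K : Matrix (Fin t) (Fin t) ℝ)
    (b : Fin t → ℝ) (c : ℝ)
    (hpsd : (Matrix.fromBlocks K (Matrix.replicateCol (Fin 1) b)
        (Matrix.replicateRow (Fin 1) b) (Matrix.of fun _ _ => c)).PosSemidef)
    (lam : ℝ) (hlam : 0 < lam) :
    b ⬝ᵥ (((K + lam • (1 : Matrix (Fin t) (Fin t) ℝ))⁻¹ *
        (K + lam • (1 : Matrix (Fin t) (Fin t) ℝ))⁻¹) *ᵥ b) ≤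
      lam⁻¹ * (c - b ⬝ᵥ ((K + lam • (1 : Matrix (Fin t) (Fin t) ℝ))⁻¹ *ᵥ b)) := by
  set A := K + lam • (1 : Matrix (Fin t) (Fin t) ℝ)
  have hA : A.PosDef := PosDef.posSemidef_add hpsd.of_fromBlocks (PosDef.one.smul hlam)
  set v := A⁻¹ *ᵥ b
  have hAv : A *ᵥ v = b := by
    rw [mulVec_mulVec, mul_nonsing_inv _ hA.det_pos.ne'.isUnit, one_mulVec]
  have hbv : b ⬝ᵥ v = v ⬝ᵥ (K *ᵥ v) + lam * (v ⬝ᵥ v) := by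
    rw [← hAv, dotProduct_comm, add_mulVec, smul_mulVec, one_mulVec, dotProduct_add,
      dotProduct_smul, smul_eq_mul]
  have hquad := hpsd.two_mul_dotProduct_le_of_fromBlocks v
  rw [(isHermitian_iff_isSymm.mp hA.isHermitian.inv).dotProduct_mul_self_mulVec,
    le_inv_mul_iff₀ hlam]
  linarith

/-- If the block matrix `[[K, b], [bᵀ, c]]` is positive semidefinite
(`K` symmetric `t × t`), and `λ > 0`, then
`bᵀ (K + λ I)⁻² b ≤ λ⁻¹ (c − bᵀ (K + λ I)⁻¹ b)`. -/
theorem posterior_mean_noise_coefficient_bound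
    {t : ℕ} (ht : 1 ≤ t)
    (K : Matrix (Fin t) (Fin t) ℝ) (hK : K.IsSymm)
    (b : Fin t → ℝ) (c : ℝ)
    (hpsd : (Matrix.fromBlocks K (Matrix.replicateCol (Fin 1) b)
        (Matrix.replicateRow (Fin 1) b) (Matrix.of fun _ _ => c)).PosSemidef)
    (lam : ℝ) (hlam : 0 < lam) :
    b ⬝ᵥ (((K + lam • (1 : Matrix (Fin t) (Fin t) ℝ))⁻¹ *
        (K + lam • (1 : Matrix (Fin t) (Fin t) ℝ))⁻¹) *ᵥ b) ≤
      lam⁻¹ * (c - b ⬝ᵥ ((K + lam • (1 : Matrix (Fin t) (Fin t) ℝ))⁻¹ *ᵥ b)) :=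
  posterior_mean_noise_coefficient_bound_general K b c hpsd lam hlam
end

section
/- Let k be a positive semidefinite kernel on a set X, let x_1, …, x_t ∈ X, and let λ > 0. For 1 ≤ s ≤ t let K_s = [k(x_i,x_j)]_{i,j=1}^s and let σ²_{s−1}(x_s) = k(x_s,x_s) − k_{s−1}(x_s)ᵀ (K_{s−1} + λ I_{s−1})⁻¹ k_{s−1}(x_s), where k_{s−1}(x) = (k(x_1,x),…,k(x_{s−1},x))ᵀ and σ_0²(x) = k(x,x). Then det(I_t + λ⁻¹ K_t) = ∏_{s=1}^t (1 + λ⁻¹ σ²_{s−1}(x_s)). -/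
open Matrix

/-- Gram matrix of the first `s` points `x 0, …, x (s-1)` under the kernel `k`. -/
noncomputable def gramMatrix {X : Type*} (k : X → X → ℝ) (x : ℕ → X) (s : ℕ) :
    Matrix (Fin s) (Fin s) ℝ :=
  Matrix.of fun i j => k (x i) (x j)

/-- Gaussian-process posterior variance at `y` after conditioning on the first `s`
points `x 0, …, x (s-1)`, with regularization `λ`:
`σ_s²(y) = k(y,y) − k_s(y)ᵀ (K_s + λ I_s)⁻¹ k_s(y)` (and `σ_0²(y) = k(y,y)`). -/
noncomputable def postVar {X : Type*} (k : X → X → ℝ) (x : ℕ → X) (lam : ℝ)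
    (s : ℕ) (y : X) : ℝ :=
  k y y - (fun i : Fin s => k (x i) y) ⬝ᵥ
    ((gramMatrix k x s + lam • (1 : Matrix (Fin s) (Fin s) ℝ))⁻¹ *ᵥ
      fun i : Fin s => k (x i) y)

/-! Bordering `K_s + λI` by the point `x_s` gives `K_{s+1} + λI`, whose Schur complement with
respect to `K_s + λI` is `λ + σ_s²(x_s)`. Hence `det(K_t + λI)` telescopes into
`∏ (λ + σ_s²(x_s))`, and dividing each factor by `λ` gives the claim. -/

theorem Matrix.det_succ_eq_det_castSucc_mul_schur {R : Type*} [CommRing R] {n : ℕ}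
    (M : Matrix (Fin (n + 1)) (Fin (n + 1)) R)
    (hA : IsUnit (M.submatrix Fin.castSucc Fin.castSucc).det) :
    M.det = (M.submatrix Fin.castSucc Fin.castSucc).det *
      (M (Fin.last n) (Fin.last n) - (fun j => M (Fin.last n) j.castSucc) ⬝ᵥ
        ((M.submatrix Fin.castSucc Fin.castSucc)⁻¹ *ᵥ
          fun i => M i.castSucc (Fin.last n))) := by
  let N := M.submatrix (finSumFinEquiv (m := n) (n := 1)) finSumFinEquiv
  have hN₁₁ : N.toBlocks₁₁ = M.submatrix Fin.castSucc Fin.castSucc := rfl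
  have := (M.submatrix Fin.castSucc Fin.castSucc).invertibleOfIsUnitDet hA
  rw [← det_submatrix_equiv_self finSumFinEquiv M]
  change N.det = _
  rw [← fromBlocks_toBlocks N, hN₁₁, det_fromBlocks₁₁, det_fin_one, invOf_eq_nonsing_inv]
  congr 1
  rw [sub_apply, Matrix.mul_assoc]
  -- the `1 × 1` entry of `C * (A⁻¹ * B)` unfolds to `C 0 ⬝ᵥ (A⁻¹ *ᵥ B · 0)`
  rfl

theorem submatrix_castSucc_gramMatrix_add_smul_one {X : Type*} (k : X → X → ℝ) (x : ℕ → X)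
    (s : ℕ) (lam : ℝ) :
    (gramMatrix k x (s + 1) + lam • 1).submatrix Fin.castSucc Fin.castSucc =
      gramMatrix k x s + lam • 1 := by
  ext i j
  simp [gramMatrix, one_apply]

def IsPosSemidefKernel {X : Type*} (k : X → X → ℝ) : Prop :=
  ∀ (n : ℕ) (v : Fin n → X),
    (Matrix.of fun i j => k (v i) (v j) : Matrix (Fin n) (Fin n) ℝ).PosSemidef

namespace IsPosSemidefKernel

variable {X : Type*} {k : X → X → ℝ}

theorem symm (hk : IsPosSemidefKernel k) (a b : X) : k a b = k b a := by
  simpa using congrFun (congrFun (hk 2 ![a, b]).isHermitian 1) 0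

theorem posDef_gramMatrix_add_smul_one (hk : IsPosSemidefKernel k) (x : ℕ → X) (s : ℕ)
    {lam : ℝ} (hlam : 0 < lam) : (gramMatrix k x s + lam • 1).PosDef :=
  PosDef.posSemidef_add (hk s fun i => x i) (PosDef.one.smul hlam)

theorem det_gramMatrix_add_smul_one_succ (hk : IsPosSemidefKernel k) (x : ℕ → X) (s : ℕ)
    {lam : ℝ} (hlam : 0 < lam) :
    (gramMatrix k x (s + 1) + lam • 1).det =
      (gramMatrix k x s + lam • 1).det * (lam + postVar k x lam s (x s)) := by
  have hA := (hk.posDef_gramMatrix_add_smul_one x s hlam).det_pos.ne'.isUnit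
  rw [det_succ_eq_det_castSucc_mul_schur _ (by rwa [submatrix_castSucc_gramMatrix_add_smul_one]),
    submatrix_castSucc_gramMatrix_add_smul_one]
  congr 1
  simp only [postVar, gramMatrix, Matrix.add_apply, Matrix.smul_apply, of_apply, one_apply,
    Fin.val_last, Fin.val_castSucc, Fin.castSucc_ne_last, (Fin.castSucc_lt_last _).ne',
    hk.symm (x s), ↓reduceIte, smul_eq_mul, mul_one, mul_zero, add_zero]
  ring

theorem det_gramMatrix_add_smul_one (hk : IsPosSemidefKernel k) (x : ℕ → X) (t : ℕ)
    {lam : ℝ} (hlam : 0 < lam) :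
    (gramMatrix k x t + lam • 1).det =
      ∏ s ∈ Finset.range t, (lam + postVar k x lam s (x s)) := by
  induction t with
  | zero => simp
  | succ t ih => rw [hk.det_gramMatrix_add_smul_one_succ x t hlam, ih, Finset.prod_range_succ]

end IsPosSemidefKernel

/-- For a positive semidefinite kernel `k`, points `x_1, …, x_t` and
`λ > 0`, `det(I_t + λ⁻¹ K_t) = ∏_{s=1}^t (1 + λ⁻¹ σ²_{s−1}(x_s))`. -/
theorem det_eq_prod_posterior_variances
    {X : Type*} (k : X → X → ℝ)
    (hpsd : ∀ (n : ℕ) (v : Fin n → X),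
      (Matrix.of fun i j => k (v i) (v j) : Matrix (Fin n) (Fin n) ℝ).PosSemidef)
    (x : ℕ → X) (t : ℕ) (lam : ℝ) (hlam : 0 < lam) :
    ((1 : Matrix (Fin t) (Fin t) ℝ) + lam⁻¹ • gramMatrix k x t).det =
      ∏ s ∈ Finset.range t, (1 + lam⁻¹ * postVar k x lam s (x s)) := by
  have hfactor : (1 : Matrix (Fin t) (Fin t) ℝ) + lam⁻¹ • gramMatrix k x t =
      lam⁻¹ • (gramMatrix k x t + lam • 1) := by
    rw [smul_add, smul_smul, inv_mul_cancel₀ hlam.ne', one_smul, add_comm]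
  calc ((1 : Matrix (Fin t) (Fin t) ℝ) + lam⁻¹ • gramMatrix k x t).det
      = ∏ s ∈ Finset.range t, lam⁻¹ * (lam + postVar k x lam s (x s)) := by
        rw [hfactor, det_smul, IsPosSemidefKernel.det_gramMatrix_add_smul_one hpsd x t hlam,
          Fintype.card_fin, Finset.prod_mul_distrib, Finset.prod_const, Finset.card_range]
    _ = ∏ s ∈ Finset.range t, (1 + lam⁻¹ * postVar k x lam s (x s)) := by
        simp only [mul_add, inv_mul_cancel₀ hlam.ne']
end

section
/- Let k be a positive semidefinite kernel on a set X with k(x,x) ≤ 1 for all x ∈ X, let x_1, …, x_t ∈ X, and let λ > 0. With σ²_{s−1}(x_s) defined as the Gaussian-process posterior variance after the first s−1 points (σ²_{s−1}(x_s) = k(x_s,x_s) − k_{s−1}(x_s)ᵀ(K_{s−1} + λI)⁻¹ k_{s−1}(x_s), σ_0²(x) = k(x,x)), it holds that Σ_{s=1}^t σ²_{s−1}(x_s) ≤ (1 / log(1 + λ⁻¹)) · log det(I_t + λ⁻¹ K_t), where K_t = [k(x_i,x_j)]_{i,j=1}^t. -/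
open Matrix

/-! Bordering `K_s + λI` by the point `x_s` gives `K_{s+1} + λI`, whose Schur complement
with respect to `K_s + λI` is `σ_s²(x_s) + λ`; hence
`det(I + λ⁻¹K_t) = ∏_s (1 + λ⁻¹σ_s²(x_s))`.
Each `σ_s²(x_s)` lies in `[0, 1]`: it is itself a Schur complement of a positive semidefinite
matrix, and it is at most `k(x_s, x_s) ≤ 1`. On `[0, 1]` concavity of `log` gives
`u log(1 + λ⁻¹) ≤ log(1 + λ⁻¹u)`, and summing over `s` gives the bound. -/

section BorderedMatrix

variable {m ι : Type*} [Fintype m] [DecidableEq m] [Fintype ι] [Unique ι]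

theorem Matrix.det_fromBlocks_replicateCol_replicateRow [DecidableEq ι] {α : Type*}
    [CommRing α] {A : Matrix m m α} (hA : IsUnit A.det) (u v : m → α) (d : α) :
    (fromBlocks A (replicateCol ι u) (replicateRow ι v) (of fun _ _ => d)).det =
      A.det * (d - v ⬝ᵥ A⁻¹ *ᵥ u) := by
  have := A.invertibleOfIsUnitDet hA
  rw [det_fromBlocks₁₁, invOf_eq_nonsing_inv, det_unique (n := ι), sub_apply, Matrix.mul_assoc,
    ← replicateCol_mulVec, replicateRow_mul_replicateCol_apply, of_apply]

theorem Matrix.PosDef.dotProduct_inv_mulVec_le_of_posSemidef_fromBlocks {A : Matrix m m ℝ}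
    (hA : A.PosDef) {u : m → ℝ} {d : ℝ}
    (h : (fromBlocks A (replicateCol ι u) (replicateRow ι u) (of fun _ _ => d)).PosSemidef) :
    u ⬝ᵥ A⁻¹ *ᵥ u ≤ d := by
  have := A.invertibleOfIsUnitDet hA.det_pos.ne'.isUnit
  have hrow : replicateRow ι u = (replicateCol ι u)ᴴ := by
    rw [conjTranspose_replicateCol, star_trivial]
  rw [hrow] at h
  have hschur := ((hA.fromBlocks₁₁ _ _).mp h).diag_nonneg (i := default)
  rwa [sub_apply, Matrix.mul_assoc, ← hrow, ← replicateCol_mulVec,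
    replicateRow_mul_replicateCol_apply, of_apply, sub_nonneg] at hschur

end BorderedMatrix

section Kernel

variable {X : Type*} {k : X → X → ℝ}
  (hpsd : ∀ (n : ℕ) (v : Fin n → X),
    (of fun i j => k (v i) (v j) : Matrix (Fin n) (Fin n) ℝ).PosSemidef)
include hpsd

theorem kernel_symm_of_posSemidef (a b : X) : k a b = k b a := by
  simpa using congrFun (congrFun (hpsd 2 ![a, b]).isHermitian 1) 0

theorem posSemidef_kernelMatrix {ι : Type*} [Fintype ι] (v : ι → X) :
    (of fun i j => k (v i) (v j)).PosSemidef := by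
  let e := Fintype.equivFin ι
  convert (hpsd _ (v ∘ e.symm)).submatrix e
  ext i j
  simp

end Kernel

theorem kernelMatrix_sumElim_eq_fromBlocks {X : Type*} {k : X → X → ℝ}
    (hsymm : ∀ a b, k a b = k b a) (x : ℕ → X) (s : ℕ) (y : X) :
    (of fun i j => k (Sum.elim (fun i : Fin s => x i) (fun _ : Fin 1 => y) i)
      (Sum.elim (fun i : Fin s => x i) (fun _ : Fin 1 => y) j)) =
    fromBlocks (gramMatrix k x s) (replicateCol (Fin 1) fun i => k (x i) y)
      (replicateRow (Fin 1) fun i => k (x i) y) (of fun _ _ => k y y) := by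
  ext (i | i) (j | j) <;> simp [gramMatrix, hsymm y]

section PosteriorVariance

variable {X : Type*} {k : X → X → ℝ} {x : ℕ → X} {lam : ℝ}
  (hpsd : ∀ (n : ℕ) (v : Fin n → X),
    (of fun i j => k (v i) (v j) : Matrix (Fin n) (Fin n) ℝ).PosSemidef)
include hpsd

theorem posDef_gramMatrix_add_smul_one (hlam : 0 < lam) (s : ℕ) :
    (gramMatrix k x s + lam • (1 : Matrix (Fin s) (Fin s) ℝ)).PosDef := by
  refine PosDef.posSemidef_add (hpsd s fun i => x i) ?_
  rw [smul_one_eq_diagonal]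
  exact PosDef.diagonal fun _ => hlam

theorem postVar_nonneg (hlam : 0 < lam) (s : ℕ) (y : X) : 0 ≤ postVar k x lam s y := by
  have hdiag : (diagonal (Sum.elim (fun _ : Fin s => lam) (0 : Fin 1 → ℝ))).PosSemidef :=
    PosSemidef.diagonal fun i => by cases i <;> simp [hlam.le]
  have hblocks : (fromBlocks (gramMatrix k x s + lam • (1 : Matrix (Fin s) (Fin s) ℝ))
      (replicateCol (Fin 1) fun i => k (x i) y) (replicateRow (Fin 1) fun i => k (x i) y)
      (of fun _ _ => k y y)).PosSemidef := by
    convert (posSemidef_kernelMatrix hpsd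
      (Sum.elim (fun i : Fin s => x i) (fun _ : Fin 1 => y))).add hdiag using 1
    rw [kernelMatrix_sumElim_eq_fromBlocks (kernel_symm_of_posSemidef hpsd),
      ← fromBlocks_diagonal, fromBlocks_add, smul_one_eq_diagonal]
    simp
  exact sub_nonneg.mpr <| (posDef_gramMatrix_add_smul_one hpsd hlam s)
    |>.dotProduct_inv_mulVec_le_of_posSemidef_fromBlocks hblocks

theorem postVar_le_self (hlam : 0 < lam) (s : ℕ) (y : X) : postVar k x lam s y ≤ k y y := by
  have hquad := (posDef_gramMatrix_add_smul_one (x := x) hpsd hlam s).inv.posSemidef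
    |>.dotProduct_mulVec_nonneg fun i => k (x i) y
  simp only [star_trivial] at hquad
  exact sub_le_self _ hquad

theorem det_gramMatrix_succ_add_smul_one (hlam : 0 < lam) (s : ℕ) :
    (gramMatrix k x (s + 1) + lam • (1 : Matrix (Fin (s + 1)) (Fin (s + 1)) ℝ)).det =
      (gramMatrix k x s + lam • (1 : Matrix (Fin s) (Fin s) ℝ)).det *
        (postVar k x lam s (x s) + lam) := by
  have hblocks :
      (gramMatrix k x (s + 1) + lam • (1 : Matrix (Fin (s + 1)) (Fin (s + 1)) ℝ)).submatrix
        finSumFinEquiv finSumFinEquiv =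
      fromBlocks (gramMatrix k x s + lam • (1 : Matrix (Fin s) (Fin s) ℝ))
        (replicateCol (Fin 1) fun i => k (x i) (x s))
        (replicateRow (Fin 1) fun i => k (x i) (x s)) (of fun _ _ => k (x s) (x s) + lam) := by
    ext (i | i) (j | j) <;>
      simp [gramMatrix, one_apply, kernel_symm_of_posSemidef hpsd (x s), Fin.fin_one_eq_zero,
        Fin.ext_iff] <;> omega
  rw [← det_submatrix_equiv_self finSumFinEquiv, hblocks,
    det_fromBlocks_replicateCol_replicateRow
      (posDef_gramMatrix_add_smul_one hpsd hlam s).det_pos.ne'.isUnit, postVar]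
  ring

theorem det_gramMatrix_add_smul_one (hlam : 0 < lam) (t : ℕ) :
    (gramMatrix k x t + lam • (1 : Matrix (Fin t) (Fin t) ℝ)).det =
      ∏ s ∈ Finset.range t, (postVar k x lam s (x s) + lam) := by
  induction t with
  | zero => simp
  | succ t ih => rw [det_gramMatrix_succ_add_smul_one hpsd hlam, ih, Finset.prod_range_succ]

theorem det_one_add_inv_smul_gramMatrix (hlam : 0 < lam) (t : ℕ) :
    ((1 : Matrix (Fin t) (Fin t) ℝ) + lam⁻¹ • gramMatrix k x t).det =
      ∏ s ∈ Finset.range t, (1 + lam⁻¹ * postVar k x lam s (x s)) := by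
  have hscale : (1 : Matrix (Fin t) (Fin t) ℝ) + lam⁻¹ • gramMatrix k x t =
      lam⁻¹ • (gramMatrix k x t + lam • 1) := by
    rw [smul_add, smul_smul, inv_mul_cancel₀ hlam.ne', one_smul, add_comm]
  have hterm (s : ℕ) : 1 + lam⁻¹ * postVar k x lam s (x s) =
      lam⁻¹ * (postVar k x lam s (x s) + lam) := by
    rw [mul_add, inv_mul_cancel₀ hlam.ne', add_comm]
  rw [hscale, det_smul, det_gramMatrix_add_smul_one hpsd hlam, Fintype.card_fin,
    Finset.prod_congr rfl fun s _ => hterm s, Finset.prod_mul_distrib, Finset.prod_const,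
    Finset.card_range]

end PosteriorVariance

theorem Real.mul_log_one_add_le_log_one_add_mul {c u : ℝ} (hc : -1 < c) (hu₀ : 0 ≤ u)
    (hu₁ : u ≤ 1) : u * Real.log (1 + c) ≤ Real.log (1 + c * u) := by
  have hconcave := strictConcaveOn_log_Ioi.concaveOn.2 (Set.mem_Ioi.mpr one_pos)
    (Set.mem_Ioi.mpr (by linarith : (0 : ℝ) < 1 + c)) (sub_nonneg.mpr hu₁) hu₀ (by ring)
  simp only [smul_eq_mul, Real.log_one, mul_zero, zero_add] at hconcave
  rwa [show (1 - u) * 1 + u * (1 + c) = 1 + c * u by ring] at hconcave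

/-- For a positive semidefinite kernel with `k(x,x) ≤ 1`, any points
`x_1, …, x_t` and `λ > 0`, the cumulative sequential posterior variances satisfy
`Σ_{s=1}^t σ²_{s−1}(x_s) ≤ (1 / log(1 + λ⁻¹)) · log det(I_t + λ⁻¹ K_t)`. -/
theorem sum_posterior_variances_le_information_gain
    {X : Type*} (k : X → X → ℝ)
    (hpsd : ∀ (n : ℕ) (v : Fin n → X),
      (Matrix.of fun i j => k (v i) (v j) : Matrix (Fin n) (Fin n) ℝ).PosSemidef)
    (hbound : ∀ y : X, k y y ≤ 1)
    (x : ℕ → X) (t : ℕ) (lam : ℝ) (hlam : 0 < lam) :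
    ∑ s ∈ Finset.range t, postVar k x lam s (x s) ≤
      (1 / Real.log (1 + lam⁻¹)) *
        Real.log ((1 : Matrix (Fin t) (Fin t) ℝ) + lam⁻¹ • gramMatrix k x t).det := by
  have hvar₀ (s : ℕ) := postVar_nonneg (x := x) hpsd hlam s (x s)
  have hvar₁ (s : ℕ) := (postVar_le_self (x := x) hpsd hlam s (x s)).trans (hbound (x s))
  have hlam_inv : 0 < lam⁻¹ := inv_pos.mpr hlam
  rw [det_one_add_inv_smul_gramMatrix hpsd hlam,
    Real.log_prod fun s _ => by have := hvar₀ s; positivity, Finset.mul_sum]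
  gcongr with s
  rw [one_div_mul_eq_div, le_div_iff₀ (Real.log_pos (by linarith))]
  exact Real.mul_log_one_add_le_log_one_add_mul (by linarith) (hvar₀ s) (hvar₁ s)
end

section
/- Let k be a positive semidefinite kernel on a set X with k(x,x) ≤ 1 for all x, let x_1, …, x_t ∈ X, and let λ > 0. Let σ_s²(x) = k(x,x) − k_s(x)ᵀ(K_s + λI_s)⁻¹ k_s(x) denote the posterior variance after the first s points. Then Σ_{j=1}^t σ_t²(x_j) ≤ (1 / log(1 + λ⁻¹)) · log det(I_t + λ⁻¹ K_t), where K_t = [k(x_i,x_j)]_{i,j=1}^t; i.e., the sum of the final posterior variances at the queried points is bounded by the cumulative sequential posterior variances and hence by a constant multiple of the information gain. -/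
/-!
With `K` the Gram matrix and `B = K + λ I`, the identity `K - K B⁻¹ K = λ K B⁻¹` shows that the
final posterior variance at `x_j` is `λ (K B⁻¹)_{jj}`, so the sum is `λ tr (K B⁻¹)`. Diagonalising
`K` with eigenvalues `μ_i ≥ 0`, this is `∑ λ μ_i / (μ_i + λ)`, while
`log det (I + λ⁻¹ K) = ∑ log (1 + μ_i / λ)`. The bound then holds eigenvalue by eigenvalue, since
`λ log (1 + λ⁻¹) ≤ 1` and `μ / (μ + λ) = 1 - (1 + μ / λ)⁻¹ ≤ log (1 + μ / λ)`.
-/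

open Matrix

open Unitary

namespace Matrix
variable {n R : Type*} [Fintype n] [DecidableEq n]

section CommRing
variable [CommRing R]

theorem sub_mul_inv_add_smul_one_mul (K : Matrix n n R) {lam : R}
    (h : IsUnit (K + lam • 1).det) :
    K - K * (K + lam • 1)⁻¹ * K = lam • (K * (K + lam • 1)⁻¹) := by
  have hK : K * (K + lam • 1)⁻¹ * (K + lam • 1) = K := by
    rw [mul_assoc, nonsing_inv_mul _ h, mul_one]
  rw [mul_add, Matrix.mul_smul, mul_one] at hK
  exact sub_eq_of_eq_add' hK.symm

variable [StarRing R]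

theorem inv_conjStarAlgAut (U : unitary (Matrix n n R)) (A : Matrix n n R) :
    (conjStarAlgAut R _ U A)⁻¹ = conjStarAlgAut R _ U A⁻¹ := by
  have hU : (U : Matrix n n R)⁻¹ = star (U : Matrix n n R) :=
    inv_eq_left_inv (coe_star_mul_self U)
  have hU' : (star (U : Matrix n n R))⁻¹ = U :=
    inv_eq_left_inv (coe_mul_star_self U)
  simp only [conjStarAlgAut_apply, Matrix.mul_inv_rev, hU, hU', mul_assoc]

theorem det_conjStarAlgAut (U : unitary (Matrix n n R)) (A : Matrix n n R) :
    (conjStarAlgAut R _ U A).det = A.det := by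
  rw [conjStarAlgAut_apply, det_mul_right_comm, mul_star_self_of_mem U.2, one_mul]

theorem trace_conjStarAlgAut (U : unitary (Matrix n n R)) (A : Matrix n n R) :
    (conjStarAlgAut R _ U A).trace = A.trace := by
  rw [conjStarAlgAut_apply, trace_mul_cycle, coe_star_mul_self, one_mul]

theorem det_one_add_smul_of_eq_conjStarAlgAut_diagonal {K : Matrix n n R}
    {U : unitary (Matrix n n R)} {d : n → R} (hK : K = conjStarAlgAut R _ U (diagonal d))
    (c : R) : (1 + c • K).det = ∏ i, (1 + c * d i) := by
  rw [hK, ← map_one (conjStarAlgAut R _ U), ← map_smul, ← map_add, det_conjStarAlgAut,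
    ← diagonal_one, ← diagonal_smul, diagonal_add, det_diagonal]
  simp only [Pi.smul_apply, smul_eq_mul]

end CommRing

theorem trace_mul_inv_add_smul_one_of_eq_conjStarAlgAut_diagonal [Field R] [StarRing R]
    {K : Matrix n n R} {U : unitary (Matrix n n R)} {d : n → R}
    (hK : K = conjStarAlgAut R _ U (diagonal d)) {lam : R} (h : ∀ i, d i + lam ≠ 0) :
    (K * (K + lam • 1)⁻¹).trace = ∑ i, d i / (d i + lam) := by
  subst hK
  set φ := conjStarAlgAut R (Matrix n n R) U
  have hshift : φ (diagonal d) + lam • 1 = φ (diagonal fun i => d i + lam) := by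
    rw [← map_one φ, ← map_smul, ← map_add, ← diagonal_one, ← diagonal_smul, diagonal_add]
    simp only [Pi.smul_apply, smul_eq_mul, mul_one]
  have hinv : (diagonal fun i => d i + lam)⁻¹ = diagonal fun i => (d i + lam)⁻¹ :=
    inv_eq_right_inv <| by simp only [diagonal_mul_diagonal, mul_inv_cancel₀ (h _), diagonal_one]
  rw [hshift, inv_conjStarAlgAut, hinv, ← map_mul, trace_conjStarAlgAut, diagonal_mul_diagonal,
    trace_diagonal]
  simp only [div_eq_mul_inv]

end Matrix

namespace Matrix.IsHermitian
variable {n : Type*} [Fintype n] [DecidableEq n] {K : Matrix n n ℝ}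

theorem eq_conjStarAlgAut_diagonal (hK : K.IsHermitian) :
    K = conjStarAlgAut ℝ _ hK.eigenvectorUnitary (diagonal hK.eigenvalues) := by
  simpa using hK.spectral_theorem

theorem det_one_add_smul (hK : K.IsHermitian) (c : ℝ) :
    (1 + c • K).det = ∏ i, (1 + c * hK.eigenvalues i) :=
  det_one_add_smul_of_eq_conjStarAlgAut_diagonal hK.eq_conjStarAlgAut_diagonal c

theorem trace_mul_inv_add_smul_one (hK : K.IsHermitian) {lam : ℝ}
    (h : ∀ i, hK.eigenvalues i + lam ≠ 0) :
    (K * (K + lam • 1)⁻¹).trace = ∑ i, hK.eigenvalues i / (hK.eigenvalues i + lam) :=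
  trace_mul_inv_add_smul_one_of_eq_conjStarAlgAut_diagonal hK.eq_conjStarAlgAut_diagonal h

end Matrix.IsHermitian

theorem Real.mul_div_add_le_log_one_add_inv_mul_div_log {lam μ : ℝ} (hlam : 0 < lam)
    (hμ : 0 ≤ μ) :
    lam * (μ / (μ + lam)) ≤ (1 / Real.log (1 + lam⁻¹)) * Real.log (1 + lam⁻¹ * μ) := by
  have hlog_pos : 0 < Real.log (1 + lam⁻¹) := Real.log_pos (by simpa using hlam)
  have hlam_le : lam ≤ 1 / Real.log (1 + lam⁻¹) := by
    rw [le_div_iff₀ hlog_pos, ← le_div_iff₀' hlam, one_div]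
    simpa using Real.log_le_sub_one_of_pos (x := 1 + lam⁻¹) (by positivity)
  have hfrac_le : μ / (μ + lam) ≤ Real.log (1 + lam⁻¹ * μ) := by
    have := Real.one_sub_inv_le_log_of_pos (x := 1 + lam⁻¹ * μ) (by positivity)
    convert this using 1
    field_simp
    ring
  exact mul_le_mul hlam_le hfrac_le (by positivity) (by positivity)

theorem postVar_eq_gramMatrix_sub_apply {X : Type*} (k : X → X → ℝ) (x : ℕ → X) (lam : ℝ)
    {s : ℕ} (j : Fin s) :
    postVar k x lam s (x j) = (gramMatrix k x s - (gramMatrix k x s)ᵀ *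
      (gramMatrix k x s + lam • 1)⁻¹ * gramMatrix k x s) j j := by
  rw [postVar, dotProduct_mulVec, Matrix.sub_apply, mul_apply']
  rfl

theorem sum_final_posterior_variances_le_information_gain_general
    {X : Type*} (k : X → X → ℝ)
    (hpsd : ∀ (n : ℕ) (v : Fin n → X),
      (Matrix.of fun i j => k (v i) (v j) : Matrix (Fin n) (Fin n) ℝ).PosSemidef)
    (x : ℕ → X) (t : ℕ) (lam : ℝ) (hlam : 0 < lam) :
    ∑ j ∈ Finset.range t, postVar k x lam t (x j) ≤
      (1 / Real.log (1 + lam⁻¹)) *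
        Real.log ((1 : Matrix (Fin t) (Fin t) ℝ) + lam⁻¹ • gramMatrix k x t).det := by
  set K := gramMatrix k x t
  have hK : K.PosSemidef := hpsd t fun i => x i
  set μ := hK.1.eigenvalues
  have hμ : ∀ i, 0 ≤ μ i := hK.eigenvalues_nonneg
  have hgain_pos : ∀ i, 0 < 1 + lam⁻¹ * μ i := fun i => by
    have := mul_nonneg (inv_pos.2 hlam).le (hμ i)
    linarith
  have hB : IsUnit (K + lam • 1).det :=
    (isUnit_iff_isUnit_det _).mp (PosDef.posSemidef_add hK (PosDef.one.smul hlam)).isUnit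
  have hpost : ∀ j : Fin t, postVar k x lam t (x j) = lam * (K * (K + lam • 1)⁻¹) j j := by
    intro j
    rw [postVar_eq_gramMatrix_sub_apply, (isHermitian_iff_isSymm.mp hK.1).eq,
      sub_mul_inv_add_smul_one_mul K hB, Matrix.smul_apply, smul_eq_mul]
  calc ∑ j ∈ Finset.range t, postVar k x lam t (x j)
      = lam * (K * (K + lam • 1)⁻¹).trace := by
        simp only [← Fin.sum_univ_eq_sum_range fun j => postVar k x lam t (x j), hpost, trace,
          diag, Finset.mul_sum]
    _ = ∑ i, lam * (μ i / (μ i + lam)) := by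
        rw [hK.1.trace_mul_inv_add_smul_one fun i => (add_pos_of_nonneg_of_pos (hμ i) hlam).ne',
          Finset.mul_sum]
    _ ≤ ∑ i, (1 / Real.log (1 + lam⁻¹)) * Real.log (1 + lam⁻¹ * μ i) :=
        Finset.sum_le_sum fun i _ => Real.mul_div_add_le_log_one_add_inv_mul_div_log hlam (hμ i)
    _ = _ := by
        rw [hK.1.det_one_add_smul, Real.log_prod fun i _ => (hgain_pos i).ne', Finset.mul_sum]

/-- For a positive semidefinite kernel with `k(x,x) ≤ 1`, points
`x_1, …, x_t` and `λ > 0`, the sum of the final posterior variances at the queried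
points satisfies `Σ_{j=1}^t σ_t²(x_j) ≤ (1 / log(1 + λ⁻¹)) · log det(I_t + λ⁻¹ K_t)`. -/
theorem sum_final_posterior_variances_le_information_gain
    {X : Type*} (k : X → X → ℝ)
    (hpsd : ∀ (n : ℕ) (v : Fin n → X),
      (Matrix.of fun i j => k (v i) (v j) : Matrix (Fin n) (Fin n) ℝ).PosSemidef)
    (hbound : ∀ y : X, k y y ≤ 1)
    (x : ℕ → X) (t : ℕ) (lam : ℝ) (hlam : 0 < lam) :
    ∑ j ∈ Finset.range t, postVar k x lam t (x j) ≤
      (1 / Real.log (1 + lam⁻¹)) *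
        Real.log ((1 : Matrix (Fin t) (Fin t) ℝ) + lam⁻¹ • gramMatrix k x t).det :=
  sum_final_posterior_variances_le_information_gain_general k hpsd x t lam hlam
end
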